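/- Fix a number of trials L ≥ 1 and a callback pattern z ∈ {0,…,L}^2. Let G be a Borel probability measure on [0,1]^2 assigning probability zero to the two points (0,0) and (1,1). Then, as L' → ∞, N(G; z, L') converges to ∫ ( (1/2)·1{p_a = p_b} + 1{p_a > p_b} ) p(z | θ) dG(θ), and D(G; z, L') converges to ∫ ( (1/2)·1{p_a = p_b} + 1{p_a < p_b} ) p(z | θ) dG(θ). (Dominated-convergence step in the proof of Proposition 1(c).) -/

import Mathlib

open MeasureTheory Filter Topology

/-- Binomial probability mass function `b(c; L, p)`. -/
noncomputable def binomPMF (L c : ℕ) (p : ℝ) : ℝ :=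
  (L.choose c : ℝ) * p ^ c * (1 - p) ^ (L - c)

/-- Bivariate binomial likelihood `p(z | θ)` with `L` trials per group. -/
noncomputable def biLik (L : ℕ) (z : ℕ × ℕ) (θ : ℝ × ℝ) : ℝ :=
  binomPMF L z.1 θ.1 * binomPMF L z.2 θ.2

/-- Probability that group a gets strictly more callbacks than group b in `L'` fresh trials. -/
noncomputable def gtKernel (L' : ℕ) (θ : ℝ × ℝ) : ℝ :=
  ∑ cb ∈ Finset.range L', ∑ ca ∈ Finset.Icc (cb + 1) L',
    binomPMF L' ca θ.1 * binomPMF L' cb θ.2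

/-- Probability that group a gets strictly fewer callbacks than group b in `L'` fresh trials. -/
noncomputable def ltKernel (L' : ℕ) (θ : ℝ × ℝ) : ℝ :=
  ∑ cb ∈ Finset.Icc 1 L', ∑ ca ∈ Finset.range cb,
    binomPMF L' ca θ.1 * binomPMF L' cb θ.2

/-- Numerator `N(G; z, L')` of the posterior callback odds ratio. -/
noncomputable def Nval (G : Measure (unitInterval × unitInterval)) (L : ℕ) (z : ℕ × ℕ)
    (L' : ℕ) : ℝ :=
  ∫ θ, gtKernel L' ((θ.1 : ℝ), (θ.2 : ℝ)) * biLik L z ((θ.1 : ℝ), (θ.2 : ℝ)) ∂G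

/-- Denominator `D(G; z, L')` of the posterior callback odds ratio. -/
noncomputable def Dval (G : Measure (unitInterval × unitInterval)) (L : ℕ) (z : ℕ × ℕ)
    (L' : ℕ) : ℝ :=
  ∫ θ, ltKernel L' ((θ.1 : ℝ), (θ.2 : ℝ)) * biLik L z ((θ.1 : ℝ), (θ.2 : ℝ)) ∂G

/-- The posterior callback odds ratio `θ^odds(G; z, L') = N / D`. -/
noncomputable def thetaOdds (G : Measure (unitInterval × unitInterval)) (L : ℕ) (z : ℕ × ℕ)
    (L' : ℕ) : ℝ :=
  Nval G L z L' / Dval G L z L'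

/-!
For `θ = (p_a, p_b)`, `gtKernel L' θ` and `ltKernel L' θ` are `P(X > Y)` and `P(X < Y)` for
independent `X ~ Bin(L', p_a)`, `Y ~ Bin(L', p_b)`. If `p_a ≠ p_b`, Chebyshev's inequality
separates `X` and `Y` at the midpoint `L' (p_a + p_b) / 2`, so the kernels tend to `0` or `1`.
If `p_a = p_b = p`, symmetry gives `P(X > Y) = P(X < Y) = (1 - P(X = Y)) / 2`, and by Parseval
`P(X = Y) = ∑ b(c)² = (2π)⁻¹ ∫_{-π}^{π} (1 - 2p(1-p)(1 - cos t))^{L'} dt`, which tends to `0`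
when `0 < p < 1`. The hypothesis on `G` makes `p_a = p_b ∈ {0, 1}` a null event, and dominated
convergence (the kernels are bounded by `1`) gives the theorem.
-/

open Finset Real unitInterval

section Binomial

variable {n : ℕ} {p : ℝ}

lemma binomPMF_eq_eval (n c : ℕ) (p : ℝ) :
    binomPMF n c p = (bernsteinPolynomial ℝ n c).eval p := by
  simp [binomPMF, bernsteinPolynomial]

lemma binomPMF_nonneg (hp : p ∈ I) (n c : ℕ) : 0 ≤ binomPMF n c p := by
  have h0 : 0 ≤ p := hp.1
  have h1 : 0 ≤ 1 - p := sub_nonneg.2 hp.2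
  unfold binomPMF
  positivity

lemma sum_binomPMF (n : ℕ) (p : ℝ) : ∑ c ∈ range (n + 1), binomPMF n c p = 1 := by
  simpa [binomPMF_eq_eval, Polynomial.eval_finsetSum] using
    congrArg (Polynomial.eval p) (bernsteinPolynomial.sum ℝ n)

lemma sum_sq_sub_mul_binomPMF (n : ℕ) (p : ℝ) :
    ∑ c ∈ range (n + 1), (n * p - c) ^ 2 * binomPMF n c p = n * p * (1 - p) := by
  simpa [binomPMF_eq_eval, Polynomial.eval_finsetSum] using
    congrArg (Polynomial.eval p) (bernsteinPolynomial.variance ℝ n)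

/-- Chebyshev's inequality for the binomial law. -/
lemma sum_binomPMF_le_of_le_abs_sub (hp : p ∈ I) {t : ℝ} (ht : 0 < t) {T : Finset ℕ}
    (hT : T ⊆ range (n + 1)) (hdev : ∀ c ∈ T, t ≤ |n * p - c|) :
    ∑ c ∈ T, binomPMF n c p ≤ n * p * (1 - p) / t ^ 2 := by
  rw [← sum_sq_sub_mul_binomPMF, sum_div]
  calc ∑ c ∈ T, binomPMF n c p
      ≤ ∑ c ∈ T, (n * p - c) ^ 2 * binomPMF n c p / t ^ 2 := by
        refine sum_le_sum fun c hc => ?_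
        have hsq : t ^ 2 ≤ (n * p - c) ^ 2 := by
          simpa [sq_abs] using pow_le_pow_left₀ ht.le (hdev c hc) 2
        rw [mul_div_right_comm]
        exact le_mul_of_one_le_left (binomPMF_nonneg hp n c)
          ((one_le_div (by positivity)).2 hsq)
    _ ≤ ∑ c ∈ range (n + 1), (n * p - c) ^ 2 * binomPMF n c p / t ^ 2 :=
        sum_le_sum_of_subset_of_nonneg hT fun c _ _ => by
          have := binomPMF_nonneg hp n c
          positivity

end Binomial

noncomputable def binomPairPMF (n : ℕ) (θ : ℝ × ℝ) (c : ℕ × ℕ) : ℝ :=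
  binomPMF n c.1 θ.1 * binomPMF n c.2 θ.2

section BinomialPair

variable {a b : ℝ}

lemma binomPairPMF_nonneg (ha : a ∈ I) (hb : b ∈ I) (n : ℕ) (c : ℕ × ℕ) :
    0 ≤ binomPairPMF n (a, b) c :=
  mul_nonneg (binomPMF_nonneg ha n c.1) (binomPMF_nonneg hb n c.2)

lemma sum_binomPairPMF (n : ℕ) (θ : ℝ × ℝ) :
    ∑ c ∈ range (n + 1) ×ˢ range (n + 1), binomPairPMF n θ c = 1 := by
  simp [binomPairPMF, sum_product, ← sum_mul_sum, sum_binomPMF]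

lemma sum_filter_binomPairPMF_mem_unitInterval (ha : a ∈ I) (hb : b ∈ I) (n : ℕ)
    (P : ℕ × ℕ → Prop) [DecidablePred P] :
    ∑ c ∈ range (n + 1) ×ˢ range (n + 1) with P c, binomPairPMF n (a, b) c ∈ I :=
  ⟨sum_nonneg fun c _ => binomPairPMF_nonneg ha hb n c,
    sum_binomPairPMF n (a, b) ▸
      sum_le_sum_of_subset_of_nonneg (filter_subset _ _)
        fun c _ _ => binomPairPMF_nonneg ha hb n c⟩

lemma gtKernel_eq_sum (n : ℕ) (θ : ℝ × ℝ) :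
    gtKernel n θ = ∑ c ∈ range (n + 1) ×ˢ range (n + 1) with c.2 < c.1, binomPairPMF n θ c := by
  rw [sum_finset_product_right _ (range n) fun cb => Icc (cb + 1) n]
  · rfl
  · intro c
    simp only [mem_filter, mem_product, mem_range, mem_Icc]
    omega

lemma ltKernel_eq_sum (n : ℕ) (θ : ℝ × ℝ) :
    ltKernel n θ = ∑ c ∈ range (n + 1) ×ˢ range (n + 1) with c.1 < c.2, binomPairPMF n θ c := by
  rw [sum_finset_product_right _ (Icc 1 n) fun cb => range cb]
  · rfl
  · intro c
    simp only [mem_filter, mem_product, mem_range, mem_Icc]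
    omega

lemma ltKernel_swap (n : ℕ) (a b : ℝ) : ltKernel n (a, b) = gtKernel n (b, a) := by
  rw [ltKernel_eq_sum, gtKernel_eq_sum]
  refine sum_equiv (Equiv.prodComm ℕ ℕ) (fun c => ?_) fun c _ => mul_comm _ _
  simp [and_comm]

lemma gtKernel_add_ltKernel_add_sum_mul_eq_one (n : ℕ) (θ : ℝ × ℝ) :
    gtKernel n θ + ltKernel n θ + ∑ c ∈ range (n + 1), binomPMF n c θ.1 * binomPMF n c θ.2
      = 1 := by
  rw [gtKernel_eq_sum, ltKernel_eq_sum, ← sum_binomPairPMF n θ]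
  rw [show ∑ c ∈ range (n + 1), binomPMF n c θ.1 * binomPMF n c θ.2
      = ∑ c ∈ range (n + 1) ×ˢ range (n + 1) with c.1 = c.2, binomPairPMF n θ c
    by rw [← diag_eq_filter, sum_diag]; rfl]
  simp only [sum_filter, ← sum_add_distrib]
  refine sum_congr rfl fun c _ => ?_
  rcases lt_trichotomy c.1 c.2 with h | h | h
  · simp [h, h.ne, h.not_gt]
  · simp [h]
  · simp [h, h.ne', h.not_gt]

end BinomialPair

section Separated

variable {a b : ℝ}

lemma sum_filter_le_binomPairPMF_le (ha : a ∈ I) (hb : b ∈ I) (n : ℕ) (m : ℝ) :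
    ∑ c ∈ range (n + 1) ×ˢ range (n + 1) with c.1 ≤ c.2, binomPairPMF n (a, b) c
      ≤ ∑ c ∈ range (n + 1) with (c : ℕ) ≤ m, binomPMF n c a
        + ∑ c ∈ range (n + 1) with m ≤ (c : ℕ), binomPMF n c b := by
  calc ∑ c ∈ range (n + 1) ×ˢ range (n + 1) with c.1 ≤ c.2, binomPairPMF n (a, b) c
      ≤ ∑ c ∈ range (n + 1) ×ˢ range (n + 1) with (c.1 : ℝ) ≤ m, binomPairPMF n (a, b) c
        + ∑ c ∈ range (n + 1) ×ˢ range (n + 1) with m ≤ (c.2 : ℝ), binomPairPMF n (a, b) c := by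
        simp only [sum_filter, ← sum_add_distrib]
        refine sum_le_sum fun c _ => ?_
        have hc := binomPairPMF_nonneg ha hb n c
        split_ifs with hle h₁ h₂ <;> try linarith
        exact absurd (Nat.cast_le.2 hle : (c.1 : ℝ) ≤ c.2) (by linarith)
    _ = _ := by
        rw [filter_product_left (fun c : ℕ => (c : ℝ) ≤ m),
          filter_product_right (fun c : ℕ => m ≤ (c : ℝ))]
        simp [binomPairPMF, sum_product, ← sum_mul_sum, sum_binomPMF]

lemma tendsto_sum_filter_le_binomPairPMF (hb0 : 0 ≤ b) (hba : b < a) (ha1 : a ≤ 1) :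
    Tendsto (fun n => ∑ c ∈ range (n + 1) ×ˢ range (n + 1) with c.1 ≤ c.2,
      binomPairPMF n (a, b) c) atTop (𝓝 0) := by
  have ha : a ∈ I := ⟨hb0.trans hba.le, ha1⟩
  have hb : b ∈ I := ⟨hb0, hba.le.trans ha1⟩
  set ε := (a - b) / 2 with hε
  have hεpos : 0 < ε := by linarith
  refine squeeze_zero' (Eventually.of_forall fun n =>
    (sum_filter_binomPairPMF_mem_unitInterval ha hb n _).1) ?_
    (tendsto_const_div_atTop_nhds_zero_nat (2 / ε ^ 2))
  filter_upwards [eventually_gt_atTop 0] with n hn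
  have hn' : (0 : ℝ) < n := by exact_mod_cast hn
  -- Chebyshev at distance `n ε` on both sides of the midpoint `n (a + b) / 2`
  have hmid := sum_filter_le_binomPairPMF_le ha hb n (n * ((a + b) / 2))
  have hta : ∑ c ∈ range (n + 1) with (c : ℕ) ≤ n * ((a + b) / 2), binomPMF n c a
      ≤ n * a * (1 - a) / (n * ε) ^ 2 :=
    sum_binomPMF_le_of_le_abs_sub ha (by positivity) (filter_subset _ _) fun c hc => by
      have := (mem_filter.1 hc).2
      rw [abs_of_nonneg (by nlinarith)]
      nlinarith
  have htb : ∑ c ∈ range (n + 1) with n * ((a + b) / 2) ≤ (c : ℕ), binomPMF n c b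
      ≤ n * b * (1 - b) / (n * ε) ^ 2 :=
    sum_binomPMF_le_of_le_abs_sub hb (by positivity) (filter_subset _ _) fun c hc => by
      have := (mem_filter.1 hc).2
      rw [abs_sub_comm, abs_of_nonneg (by nlinarith)]
      nlinarith
  have hvar : ∀ p ∈ I, n * p * (1 - p) / (n * ε) ^ 2 ≤ 1 / ε ^ 2 / n := fun p hp => by
    rw [div_le_div_iff₀ (by positivity) hn']
    have hp1 : p * (1 - p) ≤ 1 := by nlinarith [hp.1, hp.2]
    have hsq : 1 / ε ^ 2 * (n * ε) ^ 2 = n * n := by field_simp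
    rw [hsq]
    nlinarith [mul_le_mul_of_nonneg_left hp1 (mul_self_nonneg (n : ℝ))]
  linarith [hvar a ha, hvar b hb, show 2 / ε ^ 2 / n = 1 / ε ^ 2 / n + 1 / ε ^ 2 / n by ring]

end Separated

lemma integral_cos_intCast_mul (k : ℤ) :
    ∫ t in -π..π, cos (k * t) = if k = 0 then 2 * π else 0 := by
  split_ifs with hk
  · simp only [hk, Int.cast_zero, zero_mul, cos_zero, intervalIntegral.integral_const,
      sub_neg_eq_add, smul_eq_mul, mul_one]
    ring
  · have hk' : (k : ℝ) ≠ 0 := by exact_mod_cast hk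
    rw [intervalIntegral.integral_comp_mul_left (fun t => cos t) hk', integral_cos,
      mul_neg, sin_neg, sin_int_mul_pi]
    simp

/-- Parseval's identity for the trigonometric polynomial `∑ c ∈ s, x c * exp (i c t)`. -/
lemma sum_sq_eq_integral_cos_sin (s : Finset ℕ) (x : ℕ → ℝ) :
    ∑ c ∈ s, x c ^ 2 = (2 * π)⁻¹ * ∫ t in -π..π,
      ((∑ c ∈ s, x c * cos (c * t)) ^ 2 + (∑ c ∈ s, x c * sin (c * t)) ^ 2) := by
  have hexpand : ∀ t : ℝ, (∑ c ∈ s, x c * cos (c * t)) ^ 2 + (∑ c ∈ s, x c * sin (c * t)) ^ 2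
      = ∑ c ∈ s ×ˢ s, x c.1 * x c.2 * cos (((c.1 - c.2 : ℤ) : ℝ) * t) := fun t => by
    simp only [sq, sum_mul_sum, ← sum_add_distrib, sum_product]
    refine sum_congr rfl fun i _ => sum_congr rfl fun j _ => ?_
    push_cast
    rw [sub_mul, cos_sub]
    ring
  simp_rw [hexpand]
  rw [intervalIntegral.integral_finsetSum fun c _ =>
    (by fun_prop : Continuous _).intervalIntegrable _ _]
  simp only [intervalIntegral.integral_const_mul, integral_cos_intCast_mul, sub_eq_zero,
    Nat.cast_inj, mul_ite, mul_zero, ← sum_filter, ← diag_eq_filter, sum_diag]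
  rw [← sum_mul]
  field_simp

lemma sq_sum_cos_add_sq_sum_sin_binomPMF (n : ℕ) (p t : ℝ) :
    (∑ c ∈ range (n + 1), binomPMF n c p * cos (c * t)) ^ 2
      + (∑ c ∈ range (n + 1), binomPMF n c p * sin (c * t)) ^ 2
      = (1 - 2 * p * (1 - p) * (1 - cos t)) ^ n := by
  set w : ℂ := ∑ c ∈ range (n + 1), (binomPMF n c p : ℂ) * Complex.exp ((c * t : ℝ) * Complex.I)
  have hre : w.re = ∑ c ∈ range (n + 1), binomPMF n c p * cos (c * t) := by
    simp only [w, Complex.re_sum, Complex.re_ofReal_mul, Complex.exp_ofReal_mul_I_re]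
  have him : w.im = ∑ c ∈ range (n + 1), binomPMF n c p * sin (c * t) := by
    simp only [w, Complex.im_sum, Complex.im_ofReal_mul, Complex.exp_ofReal_mul_I_im]
  have hw : w = (p * Complex.exp (t * Complex.I) + (1 - p : ℝ)) ^ n := by
    rw [add_pow]
    refine sum_congr rfl fun c _ => ?_
    rw [mul_pow, ← Complex.exp_nat_mul]
    simp only [binomPMF]
    push_cast
    ring_nf
  have hbase : Complex.normSq (p * Complex.exp (t * Complex.I) + (1 - p : ℝ))
      = 1 - 2 * p * (1 - p) * (1 - cos t) := by
    rw [Complex.normSq_apply]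
    simp only [Complex.ofReal_sub, Complex.ofReal_one, Complex.add_re, Complex.mul_re,
      Complex.ofReal_re, Complex.exp_ofReal_mul_I_re, Complex.ofReal_im,
      Complex.exp_ofReal_mul_I_im, zero_mul, sub_zero, Complex.sub_re, Complex.one_re,
      Complex.add_im, Complex.mul_im, add_zero, Complex.sub_im, Complex.one_im, sub_self]
    linear_combination p ^ 2 * sin_sq_add_cos_sq t
  rw [← hre, ← him, sq, sq, ← Complex.normSq_apply, hw, map_pow, hbase]

lemma tendsto_sum_sq_binomPMF {p : ℝ} (hp : p ∈ Set.Ioo 0 1) :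
    Tendsto (fun n => ∑ c ∈ range (n + 1), binomPMF n c p ^ 2) atTop (𝓝 0) := by
  set h : ℝ → ℝ := fun t => 1 - 2 * p * (1 - p) * (1 - cos t)
  have hpq : 0 < p * (1 - p) := mul_pos hp.1 (sub_pos.2 hp.2)
  have hh0 : ∀ t, 0 ≤ h t := fun t => by
    nlinarith [neg_one_le_cos t, sq_nonneg (1 - 2 * p)]
  have hh1 : ∀ t, h t ≤ 1 := fun t => by
    nlinarith [cos_le_one t]
  have hlim : ∀ᵐ t, t ∈ Set.uIoc (-π) π → Tendsto (fun n => h t ^ n) atTop (𝓝 0) := by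
    filter_upwards [measure_eq_zero_iff_ae_notMem.1 (measure_singleton (0 : ℝ))] with t ht0 ht
    rw [Set.uIoc_of_le (by linarith [pi_pos])] at ht
    have hcos : cos t < 1 := (cos_le_one t).lt_of_ne fun h1 => ht0 <|
      (cos_eq_one_iff_of_lt_of_lt (by linarith [ht.1, pi_pos]) (by linarith [ht.2, pi_pos])).1 h1
    exact tendsto_pow_atTop_nhds_zero_of_lt_one (hh0 t) (by nlinarith)
  have hint : Tendsto (fun n => ∫ t in -π..π, h t ^ n) atTop (𝓝 0) := by
    simpa using intervalIntegral.tendsto_integral_filter_of_dominated_convergence (fun _ => 1)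
      (Eventually.of_forall fun n =>
        (by fun_prop : Continuous fun t => h t ^ n).aestronglyMeasurable)
      (Eventually.of_forall fun n => Eventually.of_forall fun t _ => by
        rw [norm_pow, Real.norm_of_nonneg (hh0 t)]
        exact pow_le_one₀ (hh0 t) (hh1 t))
      intervalIntegrable_const hlim
  simpa [sum_sq_eq_integral_cos_sin, sq_sum_cos_add_sq_sum_sin_binomPMF] using
    hint.const_mul (2 * π)⁻¹

section Limits

variable {a b : ℝ}

lemma tendsto_gtKernel_ltKernel_of_lt (hb0 : 0 ≤ b) (hba : b < a) (ha1 : a ≤ 1) :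
    Tendsto (fun n => gtKernel n (a, b)) atTop (𝓝 1) ∧
      Tendsto (fun n => ltKernel n (a, b)) atTop (𝓝 0) := by
  have ha : a ∈ I := ⟨hb0.trans hba.le, ha1⟩
  have hb : b ∈ I := ⟨hb0, hba.le.trans ha1⟩
  have hle := tendsto_sum_filter_le_binomPairPMF hb0 hba ha1
  constructor
  · have hgt : ∀ n, gtKernel n (a, b) = 1 - ∑ c ∈ range (n + 1) ×ˢ range (n + 1) with c.1 ≤ c.2,
        binomPairPMF n (a, b) c := fun n => by
      rw [eq_sub_iff_add_eq, gtKernel_eq_sum, ← sum_binomPairPMF n (a, b)]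
      simp_rw [← not_lt]
      exact sum_filter_add_sum_filter_not _ _ _
    simpa [hgt] using hle.const_sub 1
  · refine squeeze_zero (fun n => ?_) (fun n => ?_) hle
    · rw [ltKernel_eq_sum]
      exact (sum_filter_binomPairPMF_mem_unitInterval ha hb n _).1
    · rw [ltKernel_eq_sum]
      exact sum_le_sum_of_subset_of_nonneg (monotone_filter_right _ fun c _ h => h.le)
        fun c _ _ => binomPairPMF_nonneg ha hb n c

lemma tendsto_gtKernel_diag {p : ℝ} (hp : p ∈ Set.Ioo 0 1) :
    Tendsto (fun n => gtKernel n (p, p)) atTop (𝓝 (1 / 2)) := by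
  have hgt : ∀ n, gtKernel n (p, p) = (1 - ∑ c ∈ range (n + 1), binomPMF n c p ^ 2) / 2 :=
    fun n => by
      have := gtKernel_add_ltKernel_add_sum_mul_eq_one n (p, p)
      rw [ltKernel_swap] at this
      simp only [sq]
      linarith
  simpa [hgt] using ((tendsto_sum_sq_binomPMF hp).const_sub 1).div_const 2

end Limits

theorem tendsto_gtKernel_ltKernel {a b : ℝ} (ha : a ∈ I) (hb : b ∈ I)
    (hdiag : a = b → a ∈ Set.Ioo 0 1) :
    Tendsto (fun n => gtKernel n (a, b)) atTop
      (𝓝 ((1 / 2) * {p : ℝ × ℝ | p.1 = p.2}.indicator (fun _ => (1 : ℝ)) (a, b)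
        + {p : ℝ × ℝ | p.1 > p.2}.indicator (fun _ => (1 : ℝ)) (a, b))) ∧
    Tendsto (fun n => ltKernel n (a, b)) atTop
      (𝓝 ((1 / 2) * {p : ℝ × ℝ | p.1 = p.2}.indicator (fun _ => (1 : ℝ)) (a, b)
        + {p : ℝ × ℝ | p.1 < p.2}.indicator (fun _ => (1 : ℝ)) (a, b))) := by
  rcases lt_trichotomy b a with hba | rfl | hab
  · simpa [Set.indicator, hba, hba.ne', hba.not_gt] using
      tendsto_gtKernel_ltKernel_of_lt hb.1 hba ha.2
  · have h := tendsto_gtKernel_diag (hdiag rfl)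
    simp only [ltKernel_swap]
    constructor <;> simpa [Set.indicator] using h
  · obtain ⟨hgt, hlt⟩ := tendsto_gtKernel_ltKernel_of_lt ha.1 hab hb.2
    simp only [← ltKernel_swap] at hgt ⊢
    simpa [Set.indicator, hab, hab.ne, hab.not_gt] using ⟨hlt, hgt⟩

lemma continuous_gtKernel (n : ℕ) : Continuous (gtKernel n) := by
  unfold gtKernel binomPMF
  fun_prop

lemma continuous_ltKernel (n : ℕ) : Continuous (ltKernel n) := by
  unfold ltKernel binomPMF
  fun_prop

lemma continuous_biLik (L : ℕ) (z : ℕ × ℕ) : Continuous (biLik L z) := by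
  unfold biLik binomPMF
  fun_prop

lemma abs_gtKernel_le_one {a b : ℝ} (ha : a ∈ I) (hb : b ∈ I) (n : ℕ) :
    |gtKernel n (a, b)| ≤ 1 := by
  have h := sum_filter_binomPairPMF_mem_unitInterval ha hb n fun c => c.2 < c.1
  rw [gtKernel_eq_sum]
  exact abs_le.2 ⟨by linarith [h.1], h.2⟩

lemma abs_ltKernel_le_one {a b : ℝ} (ha : a ∈ I) (hb : b ∈ I) (n : ℕ) :
    |ltKernel n (a, b)| ≤ 1 := by
  rw [ltKernel_swap]
  exact abs_gtKernel_le_one hb ha n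

theorem tendsto_integral_mul_of_abs_le_one {α : Type*} [MeasurableSpace α] {μ : Measure α}
    {F : ℕ → α → ℝ} {f w : α → ℝ} (hF : ∀ n, AEStronglyMeasurable (F n) μ)
    (hF1 : ∀ n x, |F n x| ≤ 1) (hlim : ∀ᵐ x ∂μ, Tendsto (fun n => F n x) atTop (𝓝 (f x)))
    (hw : Integrable w μ) :
    Tendsto (fun n => ∫ x, F n x * w x ∂μ) atTop (𝓝 (∫ x, f x * w x ∂μ)) :=
  tendsto_integral_of_dominated_convergence (fun x => ‖w x‖)
    (fun n => (hF n).mul hw.aestronglyMeasurable) hw.norm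
    (fun n => Eventually.of_forall fun x => by
      rw [norm_mul, Real.norm_eq_abs]
      exact mul_le_of_le_one_left (norm_nonneg _) (hF1 n x))
    (hlim.mono fun _ h => h.mul_const _)

lemma coe_mem_Ioo_of_notMem_corners {θ : I × I} (hθ : θ ∉ ({(0, 0), (1, 1)} : Set (I × I)))
    (hdiag : (θ.1 : ℝ) = θ.2) : (θ.1 : ℝ) ∈ Set.Ioo 0 1 := by
  obtain ⟨x, y⟩ := θ
  obtain rfl : x = y := Subtype.ext hdiag
  simp only [Set.mem_insert_iff, Set.mem_singleton_iff, Prod.mk.injEq, and_self, not_or] at hθ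
  exact ⟨unitInterval.coe_pos.2 (unitInterval.pos_iff_ne_zero.2 hθ.1),
    unitInterval.coe_lt_one.2 (unitInterval.lt_one_iff_ne_one.2 hθ.2)⟩

theorem ND_limit_infinite_applications_general
    (L : ℕ) (z : ℕ × ℕ)
    (G : Measure (unitInterval × unitInterval)) [IsProbabilityMeasure G]
    (hcorner : G ({((0 : unitInterval), (0 : unitInterval)),
        ((1 : unitInterval), (1 : unitInterval))} : Set (unitInterval × unitInterval)) = 0) :
    Tendsto (fun L' => Nval G L z L') atTop
      (𝓝 (∫ θ : unitInterval × unitInterval,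
        ((1 / 2) * ({p : ℝ × ℝ | p.1 = p.2}.indicator (fun _ => (1 : ℝ))
            ((θ.1 : ℝ), (θ.2 : ℝ))) +
          {p : ℝ × ℝ | p.1 > p.2}.indicator (fun _ => (1 : ℝ)) ((θ.1 : ℝ), (θ.2 : ℝ))) *
          biLik L z ((θ.1 : ℝ), (θ.2 : ℝ)) ∂G)) ∧
    Tendsto (fun L' => Dval G L z L') atTop
      (𝓝 (∫ θ : unitInterval × unitInterval,
        ((1 / 2) * ({p : ℝ × ℝ | p.1 = p.2}.indicator (fun _ => (1 : ℝ))
            ((θ.1 : ℝ), (θ.2 : ℝ))) +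
          {p : ℝ × ℝ | p.1 < p.2}.indicator (fun _ => (1 : ℝ)) ((θ.1 : ℝ), (θ.2 : ℝ))) *
          biLik L z ((θ.1 : ℝ), (θ.2 : ℝ)) ∂G)) := by
  have hcoe : Continuous fun θ : I × I => ((θ.1 : ℝ), (θ.2 : ℝ)) := by fun_prop
  have hw : Integrable (fun θ : I × I => biLik L z (θ.1, θ.2)) G :=
    ((continuous_biLik L z).comp hcoe).integrable_of_hasCompactSupport
      (HasCompactSupport.of_compactSpace _)
  have hlim := (measure_eq_zero_iff_ae_notMem.1 hcorner).mono fun θ hθ =>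
    tendsto_gtKernel_ltKernel θ.1.2 θ.2.2 (coe_mem_Ioo_of_notMem_corners hθ)
  exact ⟨tendsto_integral_mul_of_abs_le_one
      (fun n => ((continuous_gtKernel n).comp hcoe).aestronglyMeasurable)
      (fun n θ => abs_gtKernel_le_one θ.1.2 θ.2.2 n) (hlim.mono fun _ h => h.1) hw,
    tendsto_integral_mul_of_abs_le_one
      (fun n => ((continuous_ltKernel n).comp hcoe).aestronglyMeasurable)
      (fun n θ => abs_ltKernel_le_one θ.1.2 θ.2.2 n) (hlim.mono fun _ h => h.2) hw⟩

/-- Dominated-convergence step in the proof of Proposition 1(c): as `L' → ∞`,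
`N(G; z, L')` and `D(G; z, L')` converge to the integrals of
`(1/2)·1{p_a = p_b} + 1{p_a > p_b}` (resp. `…+ 1{p_a < p_b}`) against `p(z|θ) dG(θ)`,
provided `G` puts no mass on the corner points `(0,0)` and `(1,1)`. -/
theorem ND_limit_infinite_applications
    (L : ℕ) (hL : 1 ≤ L) (z : ℕ × ℕ) (hz : z.1 ≤ L ∧ z.2 ≤ L)
    (G : Measure (unitInterval × unitInterval)) [IsProbabilityMeasure G]
    (hcorner : G ({((0 : unitInterval), (0 : unitInterval)),
        ((1 : unitInterval), (1 : unitInterval))} : Set (unitInterval × unitInterval)) = 0) :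
    Tendsto (fun L' => Nval G L z L') atTop
      (𝓝 (∫ θ : unitInterval × unitInterval,
        ((1 / 2) * ({p : ℝ × ℝ | p.1 = p.2}.indicator (fun _ => (1 : ℝ))
            ((θ.1 : ℝ), (θ.2 : ℝ))) +
          {p : ℝ × ℝ | p.1 > p.2}.indicator (fun _ => (1 : ℝ)) ((θ.1 : ℝ), (θ.2 : ℝ))) *
          biLik L z ((θ.1 : ℝ), (θ.2 : ℝ)) ∂G)) ∧
    Tendsto (fun L' => Dval G L z L') atTop
      (𝓝 (∫ θ : unitInterval × unitInterval,
        ((1 / 2) * ({p : ℝ × ℝ | p.1 = p.2}.indicator (fun _ => (1 : ℝ))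
            ((θ.1 : ℝ), (θ.2 : ℝ))) +
          {p : ℝ × ℝ | p.1 < p.2}.indicator (fun _ => (1 : ℝ)) ((θ.1 : ℝ), (θ.2 : ℝ))) *
          biLik L z ((θ.1 : ℝ), (θ.2 : ℝ)) ∂G)) :=
  ND_limit_infinite_applications_general L z G hcorner
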